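/- The combination of the limit continuity equation, ∇p̄ = 0, and the limit energy equation ∂(ρ̄ē)/∂t + div(ρ̄h̄ū) = 0 implies the divergence constraint −ρ̄²(∂h̄/∂ρ̄)(div ū) + (∂(ρ̄ē)/∂p̄)(dp̄/dt) = 0. -/

import Mathlib

/-- The limit continuity equation, `∇p̄ = 0` (encoded by `p̄ = p̄(t)`), and the limit
energy equation `∂(ρ̄ē)/∂t + div(ρ̄h̄ū) = 0`, with `ē = e(ρ̄,p̄)` and
`h̄ = e(ρ̄,p̄) + p̄/ρ̄`, imply the divergence constraint
`-ρ̄²(∂h/∂ρ)(div ū) + (∂(ρe)/∂p)(dp̄/dt) = 0`. -/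
theorem stmt_17 (d : ℕ) (e : ℝ → ℝ → ℝ)
    (ρbar : ℝ → (Fin d → ℝ) → ℝ) (ubar : ℝ → (Fin d → ℝ) → Fin d → ℝ)
    (pbar : ℝ → ℝ)
    (he : ContDiff ℝ (⊤ : ℕ∞) fun q : ℝ × ℝ => e q.1 q.2)
    (hρ : ContDiff ℝ (⊤ : ℕ∞) fun q : ℝ × (Fin d → ℝ) => ρbar q.1 q.2)
    (hu : ContDiff ℝ (⊤ : ℕ∞) fun q : ℝ × (Fin d → ℝ) => ubar q.1 q.2)
    (hp : ContDiff ℝ (⊤ : ℕ∞) pbar)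
    (hρpos : ∀ t x, 0 < ρbar t x)
    -- limit continuity equation
    (hcont : ∀ (t : ℝ) (x : Fin d → ℝ),
      deriv (fun s => ρbar s x) t
        + ∑ j : Fin d,
            fderiv ℝ (fun y => ρbar t y * ubar t y j) x (Pi.single j 1) = 0)
    -- limit energy equation ∂(ρ̄ē)/∂t + div(ρ̄h̄ū) = 0, with ρ̄h̄ = ρ̄ē + p̄
    (hen : ∀ (t : ℝ) (x : Fin d → ℝ),
      deriv (fun s => ρbar s x * e (ρbar s x) (pbar s)) t
        + ∑ j : Fin d,
            fderiv ℝ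
              (fun y => (ρbar t y * e (ρbar t y) (pbar t) + pbar t) * ubar t y j)
              x (Pi.single j 1) = 0) :
    ∀ (t : ℝ) (x : Fin d → ℝ),
      -((ρbar t x) ^ 2) * deriv (fun r => e r (pbar t) + pbar t / r) (ρbar t x)
          * (∑ j : Fin d, fderiv ℝ (fun y => ubar t y j) x (Pi.single j 1))
        + deriv (fun q => ρbar t x * e (ρbar t x) q) (pbar t) * deriv pbar t
        = 0 := by
  intro t x
  have hed : Differentiable ℝ (fun q : ℝ × ℝ => e q.1 q.2) := he.differentiable (by simp)
  have hρd : Differentiable ℝ (fun q : ℝ × (Fin d → ℝ) => ρbar q.1 q.2) :=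
    hρ.differentiable (by simp)
  have hud : Differentiable ℝ (fun q : ℝ × (Fin d → ℝ) => ubar q.1 q.2) :=
    hu.differentiable (by simp)
  have hpd : Differentiable ℝ pbar := hp.differentiable (by simp)
  set r := ρbar t x with hrdef
  set p := pbar t with hpdef
  have hrne : r ≠ 0 := ne_of_gt (hρpos t x)
  -- differentiability of slices
  have hρt : Differentiable ℝ (fun s => ρbar s x) := by
    have : Differentiable ℝ ((fun q : ℝ × (Fin d → ℝ) => ρbar q.1 q.2) ∘ fun s => (s, x)) :=
      hρd.comp (differentiable_id.prodMk (differentiable_const x))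
    simpa [Function.comp_def] using this
  have hρx : Differentiable ℝ (fun y => ρbar t y) := by
    have : Differentiable ℝ ((fun q : ℝ × (Fin d → ℝ) => ρbar q.1 q.2) ∘ fun y => (t, y)) :=
      hρd.comp ((differentiable_const t).prodMk differentiable_id)
    simpa [Function.comp_def] using this
  have hux : Differentiable ℝ (fun y => ubar t y) := by
    have : Differentiable ℝ ((fun q : ℝ × (Fin d → ℝ) => ubar q.1 q.2) ∘ fun y => (t, y)) :=
      hud.comp ((differentiable_const t).prodMk differentiable_id)
    simpa [Function.comp_def] using this
  have huj : ∀ j : Fin d, Differentiable ℝ (fun y => ubar t y j) :=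
    fun j => differentiable_pi.mp hux j
  -- fderiv of e at (r,p)
  set L := fderiv ℝ (fun q : ℝ × ℝ => e q.1 q.2) (r, p) with hLdef
  have hE : HasFDerivAt (fun q : ℝ × ℝ => e q.1 q.2) L (r, p) := (hed _).hasFDerivAt
  set er := L (1, 0) with herdef
  set ep := L (0, 1) with hepdef
  have hLab : ∀ a b : ℝ, L (a, b) = a * er + b * ep := by
    intro a b
    have h1 : ((a, b) : ℝ × ℝ) = a • ((1 : ℝ), (0 : ℝ)) + b • ((0 : ℝ), (1 : ℝ)) := by
      simp [Prod.ext_iff]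
    rw [h1, map_add, map_smul, map_smul, smul_eq_mul, smul_eq_mul]
  -- spatial derivatives
  set D := fderiv ℝ (fun y => ρbar t y) x with hDdef
  have hρxAt : HasFDerivAt (fun y => ρbar t y) D x := (hρx x).hasFDerivAt
  have hecomp : HasFDerivAt (fun y => e (ρbar t y) p)
      (L.comp (D.prod 0)) x := by
    have hcurve : HasFDerivAt (fun y => ((ρbar t y : ℝ), p)) (D.prod 0) x :=
      hρxAt.prodMk (hasFDerivAt_const p x)
    exact hE.comp x hcurve
  set Dρ := fun j : Fin d => D (Pi.single j 1) with hDρdef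
  set U := fun j : Fin d => ubar t x j with hUdef
  set DU := fun j : Fin d => fderiv ℝ (fun y => ubar t y j) x (Pi.single j 1) with hDUdef
  have hujAt : ∀ j, HasFDerivAt (fun y => ubar t y j)
      (fderiv ℝ (fun y => ubar t y j) x) x := fun j => (huj j x).hasFDerivAt
  have hcsum : ∀ j : Fin d,
      fderiv ℝ (fun y => ρbar t y * ubar t y j) x (Pi.single j 1)
        = Dρ j * U j + r * DU j := by
    intro j
    have h : fderiv ℝ (fun y => ρbar t y * ubar t y j) x = _ := (hρxAt.mul (hujAt j)).fderiv
    rw [h]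
    simp [ContinuousLinearMap.add_apply, ContinuousLinearMap.smul_apply, smul_eq_mul]
    ring
  have hensum : ∀ j : Fin d,
      fderiv ℝ (fun y => (ρbar t y * e (ρbar t y) p + p) * ubar t y j) x (Pi.single j 1)
        = (r * e r p + p) * DU j + (e r p + r * er) * (Dρ j * U j) := by
    intro j
    have hre : HasFDerivAt (fun y => ρbar t y * e (ρbar t y) p)
        (r • (L.comp (D.prod 0)) + (e r p) • D) x := hρxAt.mul hecomp
    have hre2 := hre.add_const p
    have h : fderiv ℝ (fun y => (ρbar t y * e (ρbar t y) p + p) * ubar t y j) x = _ :=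
      (hre2.mul (hujAt j)).fderiv
    rw [h]
    simp [ContinuousLinearMap.add_apply, ContinuousLinearMap.smul_apply,
      ContinuousLinearMap.comp_apply, ContinuousLinearMap.prod_apply,
      ContinuousLinearMap.zero_apply, smul_eq_mul, hLab]
    ring
  -- time derivative
  set rt := deriv (fun s => ρbar s x) t with hrtdef
  set p' := deriv pbar t with hp'def
  have hρtAt : HasDerivAt (fun s => ρbar s x) rt t := (hρt t).hasDerivAt
  have hpAt : HasDerivAt pbar p' t := (hpd t).hasDerivAt
  have hcurve : HasDerivAt (fun s => ((ρbar s x : ℝ), pbar s)) (rt, p') t := hρtAt.prodMk hpAt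
  have hecompt : HasDerivAt (fun s => e (ρbar s x) (pbar s)) (L (rt, p')) t :=
    by have := hE.comp_hasDerivAt t hcurve; exact this
  have htime : deriv (fun s => ρbar s x * e (ρbar s x) (pbar s)) t
      = rt * e r p + r * (rt * er + p' * ep) := by
    have h : deriv (fun s => ρbar s x * e (ρbar s x) (pbar s)) t = _ := (hρtAt.mul hecompt).deriv
    rw [h, hLab]
  -- derivatives appearing in the goal
  have hA : HasDerivAt (fun r' => e r' p) er r := by
    have h1 : HasDerivAt (fun r' : ℝ => ((r' : ℝ), p)) ((1 : ℝ), (0 : ℝ)) r :=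
      (hasDerivAt_id r).prodMk (hasDerivAt_const r p)
    exact hE.comp_hasDerivAt r h1
  have hB : HasDerivAt (fun r' : ℝ => p / r') (-(p / r ^ 2)) r := by
    have h := (hasDerivAt_inv hrne).const_mul p
    have h2 : p * -(r ^ 2)⁻¹ = -(p / r ^ 2) := by field_simp
    simpa [div_eq_mul_inv, h2] using h
  have hgoal1 : deriv (fun r' => e r' p + p / r') r = er - p / r ^ 2 := by
    have : deriv (fun r' => e r' p + p / r') r = _ := (hA.add hB).deriv
    rw [this]; ring
  have hC : HasDerivAt (fun q => e r q) ep p := by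
    have h1 : HasDerivAt (fun q : ℝ => ((r : ℝ), q)) ((0 : ℝ), (1 : ℝ)) p :=
      (hasDerivAt_const p r).prodMk (hasDerivAt_id p)
    exact hE.comp_hasDerivAt p h1
  have hgoal2 : deriv (fun q => r * e r q) p = r * ep := (hC.const_mul r).deriv
  -- assemble
  have hc := hcont t x
  have hn := hen t x
  simp only [← hpdef, ← hrdef] at hc hn
  rw [Finset.sum_congr rfl (fun j _ => hcsum j)] at hc
  rw [Finset.sum_congr rfl (fun j _ => hensum j), htime] at hn
  rw [Finset.sum_add_distrib, ← Finset.mul_sum] at hc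
  rw [Finset.sum_add_distrib, ← Finset.mul_sum, ← Finset.mul_sum] at hn
  rw [hgoal1, hgoal2]
  set S := ∑ j : Fin d, DU j with hSdef
  set A := ∑ j : Fin d, Dρ j * U j with hAdef
  have hdiv : -(r ^ 2) * (er - p / r ^ 2) = p - r ^ 2 * er := by field_simp; ring
  rw [hdiv]
  linear_combination hn - (e r p + r * er) * hc
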